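/- Let k ≥ 2 be an even integer and t ≥ 1 an integer. A holomorphic function f : ℍ → ℂ belongs to S_k^t(Γ(N)) if and only if: (a) f|_k π = f for every parabolic π ∈ Γ(N); (b) f|_k(γ_1−1)⋯(γ_t−1) = 0 for all γ_1,…,γ_t ∈ Γ(N); and (c) for every σ ∈ SL(2,ℤ) there are constants c, C > 0 with |(f|_k σ)(z)| ≤ C·e^{−c·Im z} for all z with Im z ≥ 1. -/

import Mathlib

open UpperHalfPlane Matrix MatrixGroups Complex Filter Topology
open scoped Manifold

/-- The weight `k` slash action of `SL(2, ℤ)` on functions `ℍ → ℂ`: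
`(f ∣[k] γ)(z) = f(γ z) (cz+d)^{-k}`. -/
noncomputable def slash (k : ℤ) (f : ℍ → ℂ) (γ : Matrix.SpecialLinearGroup (Fin 2) ℤ) : ℍ → ℂ :=
  fun z => f (γ • z) *
    (((γ : Matrix (Fin 2) (Fin 2) ℤ) 1 0 : ℂ) * (z : ℂ) + ((γ : Matrix (Fin 2) (Fin 2) ℤ) 1 1 : ℂ)) ^ (-k)

/-- `f ∣[k] (γ - 1) = f ∣[k] γ - f`. -/
noncomputable def slashD (k : ℤ) (γ : Matrix.SpecialLinearGroup (Fin 2) ℤ) (f : ℍ → ℂ) : ℍ → ℂ :=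
  slash k f γ - f

/-- Iterated application `f ∣[k] (γ₁ - 1) ⋯ (γₙ - 1)`. -/
noncomputable def slashDIter (k : ℤ) {n : ℕ} (γ : Fin n → Matrix.SpecialLinearGroup (Fin 2) ℤ)
    (f : ℍ → ℂ) : ℍ → ℂ :=
  (List.ofFn γ).foldl (fun h g => slashD k g h) f

/-- A parabolic element of `SL(2, ℤ)`: `γ ≠ ±1` and `|trace γ| = 2`. -/
def IsParabolic (γ : Matrix.SpecialLinearGroup (Fin 2) ℤ) : Prop :=
  (γ : Matrix (Fin 2) (Fin 2) ℤ) ≠ 1 ∧ (γ : Matrix (Fin 2) (Fin 2) ℤ) ≠ -1 ∧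
    ((γ : Matrix (Fin 2) (Fin 2) ℤ).trace = 2 ∨ (γ : Matrix (Fin 2) (Fin 2) ℤ).trace = -2)

/-- Exponential decay at all cusps: for every `σ ∈ SL(2, ℤ)` there are `c, C > 0` with
`|(f ∣[k] σ)(z)| ≤ C e^{-c Im z}` whenever `Im z ≥ 1`. -/
def VanishesAtCusps (k : ℤ) (f : ℍ → ℂ) : Prop :=
  ∀ σ : Matrix.SpecialLinearGroup (Fin 2) ℤ, ∃ c C : ℝ, 0 < c ∧ 0 < C ∧
    ∀ z : ℍ, 1 ≤ z.im → ‖slash k f σ z‖ ≤ C * Real.exp (-c * z.im)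

lemma slash_add (k : ℤ) (f g : ℍ → ℂ) (γ) : slash k (f + g) γ = slash k f γ + slash k g γ := by
  funext z; simp only [slash, Pi.add_apply]; ring

lemma slash_smul (k : ℤ) (c : ℂ) (f : ℍ → ℂ) (γ) : slash k (c • f) γ = c • slash k f γ := by
  funext z; simp only [slash, Pi.smul_apply, smul_eq_mul]; ring

lemma slash_zero (k : ℤ) (γ) : slash k (0 : ℍ → ℂ) γ = 0 := by
  funext z; simp [slash]

lemma slashD_add (k : ℤ) (γ) (f g : ℍ → ℂ) :
    slashD k γ (f + g) = slashD k γ f + slashD k γ g := by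
  simp only [slashD, slash_add]; abel

lemma slashD_smul (k : ℤ) (γ) (c : ℂ) (f : ℍ → ℂ) :
    slashD k γ (c • f) = c • slashD k γ f := by
  simp only [slashD, slash_smul, smul_sub]

lemma slashD_zero (k : ℤ) (γ) : slashD k γ (0 : ℍ → ℂ) = 0 := by
  simp [slashD, slash_zero]

lemma vanishes_add {k : ℤ} {f g : ℍ → ℂ} (hf : VanishesAtCusps k f) (hg : VanishesAtCusps k g) :
    VanishesAtCusps k (f + g) := by
  intro σ
  obtain ⟨c₁, C₁, hc₁, hC₁, h₁⟩ := hf σ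
  obtain ⟨c₂, C₂, hc₂, hC₂, h₂⟩ := hg σ
  refine ⟨min c₁ c₂, C₁ + C₂, lt_min hc₁ hc₂, by positivity, fun z hz => ?_⟩
  have hz0 : (0:ℝ) < z.im := lt_of_lt_of_le one_pos hz
  have e₁ : Real.exp (-c₁ * z.im) ≤ Real.exp (-(min c₁ c₂) * z.im) := by
    apply Real.exp_le_exp.2; nlinarith [min_le_left c₁ c₂]
  have e₂ : Real.exp (-c₂ * z.im) ≤ Real.exp (-(min c₁ c₂) * z.im) := by
    apply Real.exp_le_exp.2; nlinarith [min_le_right c₁ c₂]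
  have := h₁ z hz
  have := h₂ z hz
  calc ‖slash k (f + g) σ z‖
      ≤ ‖slash k f σ z‖ + ‖slash k g σ z‖ := by
        rw [slash_add]; exact norm_add_le _ _
    _ ≤ C₁ * Real.exp (-(min c₁ c₂) * z.im) + C₂ * Real.exp (-(min c₁ c₂) * z.im) := by
        nlinarith
    _ = (C₁ + C₂) * Real.exp (-(min c₁ c₂) * z.im) := by ring

lemma vanishes_smul {k : ℤ} (c : ℂ) {f : ℍ → ℂ} (hf : VanishesAtCusps k f) :
    VanishesAtCusps k (c • f) := by
  intro σ
  obtain ⟨c₁, C₁, hc₁, hC₁, h₁⟩ := hf σ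
  refine ⟨c₁, (‖c‖ + 1) * C₁, hc₁, by positivity, fun z hz => ?_⟩
  have := h₁ z hz
  have habs : ‖slash k (c • f) σ z‖ = ‖c‖ * ‖slash k f σ z‖ := by
    rw [slash_smul]; simp [_root_.map_mul]
  rw [habs]
  have h0 : (0:ℝ) ≤ ‖c‖ := (norm_nonneg c)
  have h2 : (0:ℝ) ≤ ‖slash k f σ z‖ := (norm_nonneg _)
  nlinarith [Real.exp_pos (-c₁ * z.im)]

lemma vanishes_zero (k : ℤ) : VanishesAtCusps k (0 : ℍ → ℂ) := by
  intro σ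
  refine ⟨1, 1, one_pos, one_pos, fun z hz => ?_⟩
  rw [slash_zero]
  simp only [Pi.zero_apply, map_zero, norm_zero]
  positivity

/-- The space `S_k^t(Γ(N))` of cusp forms of weight `k` and order `t`, defined recursively. -/
noncomputable def S (N : ℕ) (k : ℤ) : ℕ → Submodule ℂ (ℍ → ℂ)
  | 0 => ⊥
  | (t + 1) =>
    { carrier := {f | MDifferentiable 𝓘(ℂ) 𝓘(ℂ) f ∧
        (∀ γ ∈ CongruenceSubgroup.Gamma N, slashD k γ f ∈ S N k t) ∧
        (∀ π ∈ CongruenceSubgroup.Gamma N, IsParabolic π → slash k f π = f) ∧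
        VanishesAtCusps k f}
      add_mem' := by
        rintro a b ⟨ha1, ha2, ha3, ha4⟩ ⟨hb1, hb2, hb3, hb4⟩
        refine ⟨ha1.add hb1, fun γ hγ => ?_, fun π hπ hp => ?_, vanishes_add ha4 hb4⟩
        · rw [slashD_add]; exact (S N k t).add_mem (ha2 γ hγ) (hb2 γ hγ)
        · rw [slash_add, ha3 π hπ hp, hb3 π hπ hp]
      zero_mem' := by
        refine ⟨mdifferentiable_const, fun γ hγ => ?_, fun π hπ hp => slash_zero k π,
          vanishes_zero k⟩
        rw [slashD_zero]; exact (S N k t).zero_mem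
      smul_mem' := by
        rintro c a ⟨ha1, ha2, ha3, ha4⟩
        refine ⟨ha1.const_smul c, fun γ hγ => ?_, fun π hπ hp => ?_, vanishes_smul c ha4⟩
        · rw [slashD_smul]; exact (S N k t).smul_mem c (ha2 γ hγ)
        · rw [slash_smul, ha3 π hπ hp] }

/-!
Both directions are inductions on `t`: `f ∈ S_k^{t+1}` means holomorphy, (a) and (c) together
with `f ∣ (γ - 1) ∈ S_k^t` for all `γ ∈ Γ(N)`, and `(γ₁ - 1)⋯(γ_{t+1} - 1)` applies `γ₁ - 1` first.
For the converse, `f ∣ (γ - 1)` inherits holomorphy, (c) and (a) from `f`. For (a), parabolicity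
is invariant under conjugation, so `γ π γ⁻¹ ∈ Γ(N)` is parabolic and
`f ∣ γ π = f ∣ (γ π γ⁻¹) γ = f ∣ γ`.
-/

open scoped ModularForm

lemma slash_eq_SL_slash (k : ℤ) (f : ℍ → ℂ) (γ : SL(2, ℤ)) : slash k f γ = f ∣[k] γ := by
  funext z
  rw [ModularForm.SL_slash_apply, ModularGroup.denom_apply]
  rfl

lemma slash_mul (k : ℤ) (f : ℍ → ℂ) (A B : SL(2, ℤ)) :
    slash k f (A * B) = slash k (slash k f A) B := by
  simp only [slash_eq_SL_slash]
  exact SlashAction.slash_mul k A B f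

lemma slash_sub (k : ℤ) (f g : ℍ → ℂ) (γ : SL(2, ℤ)) :
    slash k (f - g) γ = slash k f γ - slash k g γ := by
  funext z; simp only [slash, Pi.sub_apply]; ring

lemma mdifferentiable_slashD {k : ℤ} {f : ℍ → ℂ} (hf : MDifferentiable 𝓘(ℂ) 𝓘(ℂ) f)
    (γ : SL(2, ℤ)) : MDifferentiable 𝓘(ℂ) 𝓘(ℂ) (slashD k γ f) := by
  have hγ : MDifferentiable 𝓘(ℂ) 𝓘(ℂ) (slash k f γ) := by
    rw [slash_eq_SL_slash, ModularForm.SL_slash]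
    exact hf.slash k _
  exact hγ.sub hf

namespace VanishesAtCusps

variable {k : ℤ} {f g : ℍ → ℂ}

lemma slash (hf : VanishesAtCusps k f) (γ : SL(2, ℤ)) : VanishesAtCusps k (slash k f γ) := by
  intro σ
  rw [← slash_mul]
  exact hf (γ * σ)

lemma sub (hf : VanishesAtCusps k f) (hg : VanishesAtCusps k g) : VanishesAtCusps k (f - g) := by
  rw [sub_eq_add_neg, ← neg_one_smul ℂ g]
  exact vanishes_add hf (vanishes_smul _ hg)

lemma slashD (hf : VanishesAtCusps k f) (γ : SL(2, ℤ)) : VanishesAtCusps k (slashD k γ f) :=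
  (hf.slash γ).sub hf

end VanishesAtCusps

lemma IsParabolic.conj {π : SL(2, ℤ)} (hπ : IsParabolic π) (γ : SL(2, ℤ)) :
    IsParabolic (γ * π * γ⁻¹) := by
  obtain ⟨hne_one, hne_neg_one, htrace⟩ := hπ
  have hrecover : (π : Matrix (Fin 2) (Fin 2) ℤ) =
      ((γ⁻¹ : SL(2, ℤ)) : Matrix (Fin 2) (Fin 2) ℤ) * ((γ * π * γ⁻¹ : SL(2, ℤ)) : Matrix _ _ ℤ) *
        (γ : Matrix (Fin 2) (Fin 2) ℤ) := by
    rw [← Matrix.SpecialLinearGroup.coe_mul, ← Matrix.SpecialLinearGroup.coe_mul]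
    exact congrArg _ (by group)
  have hinv :
      ((γ⁻¹ : SL(2, ℤ)) : Matrix (Fin 2) (Fin 2) ℤ) * (γ : Matrix (Fin 2) (Fin 2) ℤ) = 1 := by
    rw [← Matrix.SpecialLinearGroup.coe_mul, inv_mul_cancel, Matrix.SpecialLinearGroup.coe_one]
  refine (⟨fun h => hne_one ?_, fun h => hne_neg_one ?_, ?_⟩ : _ ∧ _ ∧ _)
  · rw [hrecover, h, mul_one, hinv]
  · rw [hrecover, h, Matrix.mul_neg, mul_one, Matrix.neg_mul, hinv]
  · rwa [Matrix.SpecialLinearGroup.coe_mul, Matrix.SpecialLinearGroup.coe_mul,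
      Matrix.trace_mul_comm, ← mul_assoc, hinv, one_mul]

lemma slash_slashD_of_parabolic_invariant {Γ : Subgroup SL(2, ℤ)} {k : ℤ} {f : ℍ → ℂ}
    (hf : ∀ π ∈ Γ, IsParabolic π → slash k f π = f) {γ π : SL(2, ℤ)} (hγ : γ ∈ Γ) (hπ : π ∈ Γ)
    (hpar : IsParabolic π) : slash k (slashD k γ f) π = slashD k γ f := by
  have hconj : slash k f (γ * π * γ⁻¹) = f :=
    hf _ (mul_mem (mul_mem hγ hπ) (inv_mem hγ)) (hpar.conj γ)
  calc slash k (slashD k γ f) π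
      = slash k f (γ * π * γ⁻¹ * γ) - slash k f π := by
        rw [slashD, slash_sub, inv_mul_cancel_right, slash_mul]
    _ = slashD k γ f := by rw [slash_mul, hconj, hf π hπ hpar, slashD]

lemma slashDIter_zero (k : ℤ) (γ : Fin 0 → SL(2, ℤ)) (f : ℍ → ℂ) : slashDIter k γ f = f := by
  simp [slashDIter]

lemma slashDIter_succ (k : ℤ) {n : ℕ} (γ : Fin (n + 1) → SL(2, ℤ)) (f : ℍ → ℂ) :
    slashDIter k γ f = slashDIter k (Fin.tail γ) (slashD k (γ 0) f) := by
  simp only [slashDIter, List.ofFn_succ, List.foldl_cons]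
  rfl

lemma mem_S_zero_iff {N : ℕ} {k : ℤ} {f : ℍ → ℂ} : f ∈ S N k 0 ↔ f = 0 :=
  Submodule.mem_bot ℂ

lemma mem_S_succ_iff {N : ℕ} {k : ℤ} {t : ℕ} {f : ℍ → ℂ} :
    f ∈ S N k (t + 1) ↔ MDifferentiable 𝓘(ℂ) 𝓘(ℂ) f ∧
      (∀ γ ∈ CongruenceSubgroup.Gamma N, slashD k γ f ∈ S N k t) ∧
      (∀ π ∈ CongruenceSubgroup.Gamma N, IsParabolic π → slash k f π = f) ∧
      VanishesAtCusps k f :=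
  Iff.rfl

lemma slashDIter_eq_zero_of_mem_S {N : ℕ} {k : ℤ} :
    ∀ {t : ℕ} {f : ℍ → ℂ}, f ∈ S N k t → ∀ γ : Fin t → SL(2, ℤ),
      (∀ j, γ j ∈ CongruenceSubgroup.Gamma N) → slashDIter k γ f = 0
  | 0, f, hf, γ, _ => by
    rw [slashDIter_zero, ← mem_S_zero_iff]
    exact hf
  | t + 1, f, hf, γ, hγ => by
    rw [slashDIter_succ]
    exact slashDIter_eq_zero_of_mem_S ((mem_S_succ_iff.mp hf).2.1 _ (hγ 0)) _
      (fun j => hγ j.succ)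

lemma mem_S_of_slashDIter_eq_zero {N : ℕ} {k : ℤ} :
    ∀ {t : ℕ} {f : ℍ → ℂ}, MDifferentiable 𝓘(ℂ) 𝓘(ℂ) f →
      (∀ π ∈ CongruenceSubgroup.Gamma N, IsParabolic π → slash k f π = f) →
      (∀ γ : Fin t → SL(2, ℤ), (∀ j, γ j ∈ CongruenceSubgroup.Gamma N) →
        slashDIter k γ f = 0) →
      VanishesAtCusps k f → f ∈ S N k t
  | 0, f, _, _, hiter, _ => by
    rw [mem_S_zero_iff, ← slashDIter_zero k Fin.elim0 f]
    exact hiter Fin.elim0 (fun j => j.elim0)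
  | t + 1, f, hf, hpar, hiter, hvan => by
    refine mem_S_succ_iff.mpr ⟨hf, fun γ hγ => ?_, hpar, hvan⟩
    refine mem_S_of_slashDIter_eq_zero (mdifferentiable_slashD hf γ)
      (fun π hπ hπpar => slash_slashD_of_parabolic_invariant hpar hγ hπ hπpar)
      (fun δ hδ => ?_) (hvan.slashD γ)
    simpa [slashDIter_succ] using hiter (Fin.cons γ δ) (Fin.cases hγ hδ)

theorem mem_S_iff_general (N : ℕ) (k : ℤ)
    (t : ℕ) (ht : 1 ≤ t) (f : ℍ → ℂ) (hf : MDifferentiable 𝓘(ℂ) 𝓘(ℂ) f) :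
    f ∈ S N k t ↔
      ((∀ π ∈ CongruenceSubgroup.Gamma N, IsParabolic π → slash k f π = f) ∧
       (∀ γ : Fin t → Matrix.SpecialLinearGroup (Fin 2) ℤ,
          (∀ j, γ j ∈ CongruenceSubgroup.Gamma N) → slashDIter k γ f = 0) ∧
       VanishesAtCusps k f) := by
  refine ⟨fun hmem => ?_,
    fun ⟨hpar, hiter, hvan⟩ => mem_S_of_slashDIter_eq_zero hf hpar hiter hvan⟩
  obtain ⟨t, rfl⟩ := Nat.exists_eq_add_of_le' ht
  obtain ⟨-, -, hpar, hvan⟩ := mem_S_succ_iff.mp hmem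
  exact ⟨hpar, slashDIter_eq_zero_of_mem_S hmem, hvan⟩

/-- A holomorphic `f : ℍ → ℂ` lies in `S_k^t(Γ(N))` iff it is invariant under the parabolic
elements of `Γ(N)`, is annihilated by all products `(γ₁−1)⋯(γ_t−1)` with `γᵢ ∈ Γ(N)`, and
decays exponentially at all cusps. -/
theorem mem_S_iff (N : ℕ) (hN : 2 ≤ N) (k : ℤ) (hk : 2 ≤ k) (hke : Even k)
    (t : ℕ) (ht : 1 ≤ t) (f : ℍ → ℂ) (hf : MDifferentiable 𝓘(ℂ) 𝓘(ℂ) f) :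
    f ∈ S N k t ↔
      ((∀ π ∈ CongruenceSubgroup.Gamma N, IsParabolic π → slash k f π = f) ∧
       (∀ γ : Fin t → Matrix.SpecialLinearGroup (Fin 2) ℤ,
          (∀ j, γ j ∈ CongruenceSubgroup.Gamma N) → slashDIter k γ f = 0) ∧
       VanishesAtCusps k f) :=
  mem_S_iff_general N k t ht f hf
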